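/- Let ρ be a compactly supported probability measure on ℝ^d, supported in B_S(0), let φ : [0,∞) → (0,∞) be Lipschitz, bounded, and nonincreasing with η = φ(2S) > 0, and let G ∈ W^{1,∞}(ℝ^d; ℝ^d) (e.g. G = ∇K with ∇K ∈ W^{1,∞}). Suppose u : supp ρ → ℝ^d is bounded and satisfies Φ(x)u(x) = ∫ φ(|x−y|)u(y)dρ(y) − (G∗ρ)(x) on supp ρ together with ∫ u dρ = 0, where Φ = φ∗ρ. Then ‖u‖_{L^∞(supp ρ)} ≤ ‖G‖_{L^∞}/η. -/

import Mathlib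

/-! Let `M` be the supremum of `‖u‖` on the support. Because `∫ u dρ = 0`, the term
`∫ φ(|x - y|) u(y) dρ` equals `∫ (φ(|x - y|) - η) u(y) dρ`, of norm at most `(Φ(x) - η) M`, since
`φ(|x - y|) ≥ φ(2S) = η` for `x, y` in the support. The velocity equation then gives
`Φ(x) ‖u(x)‖ ≤ (Φ(x) - η) M + ‖G‖_∞`, and at points where `‖u(x)‖` is close to `M` this forces
`η M ≤ ‖G‖_∞`. -/
open MeasureTheory

def measureSupport {α : Type*} [TopologicalSpace α] [MeasurableSpace α]
    (μ : Measure α) : Set α :=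
  {x | ∀ U ∈ nhds x, 0 < μ U}

open Set Filter

theorem measureSupport_eq_support {α : Type*} [TopologicalSpace α] [MeasurableSpace α]
    (μ : Measure α) : measureSupport μ = μ.support :=
  Set.ext fun x => (Measure.mem_support_iff_forall x).symm

theorem ae_mem_measureSupport {α : Type*} [TopologicalSpace α] [HereditarilyLindelofSpace α]
    [MeasurableSpace α] (μ : Measure α) : ∀ᵐ y ∂μ, y ∈ measureSupport μ := by
  rw [measureSupport_eq_support]
  exact Measure.support_mem_ae

theorem AntitoneOn.measurable_comp {α : Type*} [MeasurableSpace α] {φ : ℝ → ℝ} {f : α → ℝ}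
    (hφ : AntitoneOn φ (Ici 0)) (hf : Measurable f) (hf₀ : ∀ x, 0 ≤ f x) :
    Measurable fun x => φ (f x) := by
  have hmax : Antitone fun r => φ (max r 0) := fun a b hab =>
    hφ (le_max_right a 0) (le_max_right b 0) (max_le_max_right 0 hab)
  simpa only [Function.comp_def, max_eq_left (hf₀ _)] using hmax.measurable.comp hf

section RadialProfile

variable {E : Type*} [SeminormedAddCommGroup E] {φ : ℝ → ℝ}

theorem AntitoneOn.comp_norm_le_zero (hφ : AntitoneOn φ (Ici 0)) (x : E) : φ ‖x‖ ≤ φ 0 :=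
  hφ self_mem_Ici (norm_nonneg x) (norm_nonneg x)

theorem AntitoneOn.le_comp_norm_sub {S : ℝ} (hφ : AntitoneOn φ (Ici 0)) {x y : E}
    (hx : x ∈ Metric.closedBall 0 S) (hy : y ∈ Metric.closedBall 0 S) :
    φ (2 * S) ≤ φ ‖x - y‖ := by
  rw [mem_closedBall_zero_iff] at hx hy
  have h2S : ‖x - y‖ ≤ 2 * S := by linarith [norm_sub_le x y]
  exact hφ (norm_nonneg _) ((norm_nonneg _).trans h2S) h2S

variable [MeasurableSpace E] [OpensMeasurableSpace E] {μ : Measure E} {S : ℝ} {z : E}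

theorem AntitoneOn.integrable_comp_norm_sub [IsFiniteMeasure μ] (hφ : AntitoneOn φ (Ici 0))
    (hμ : ∀ᵐ y ∂μ, y ∈ Metric.closedBall 0 S) (hz : z ∈ Metric.closedBall 0 S) :
    Integrable (fun y => φ ‖z - y‖) μ := by
  refine Integrable.of_bound
    (hφ.measurable_comp (continuous_const.sub continuous_id).norm.measurable
      fun y => norm_nonneg _).aestronglyMeasurable
    (max |φ (2 * S)| |φ 0|) ?_
  filter_upwards [hμ] with y hy
  exact abs_le_max_abs_abs (hφ.le_comp_norm_sub hz hy) (hφ.comp_norm_le_zero _)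

theorem AntitoneOn.integral_comp_norm_sub_mem_Icc [IsProbabilityMeasure μ]
    (hφ : AntitoneOn φ (Ici 0)) (hμ : ∀ᵐ y ∂μ, y ∈ Metric.closedBall 0 S)
    (hz : z ∈ Metric.closedBall 0 S) :
    ∫ y, φ ‖z - y‖ ∂μ ∈ Icc (φ (2 * S)) (φ 0) := by
  have hint := hφ.integrable_comp_norm_sub hμ hz
  constructor
  · simpa using integral_mono_ae (integrable_const _) hint
      (hμ.mono fun y hy => hφ.le_comp_norm_sub hz hy)
  · simpa using integral_mono hint (integrable_const _) fun y => hφ.comp_norm_le_zero (z - y)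

end RadialProfile

theorem norm_integral_smul_le_of_integral_eq_zero {α E : Type*} [MeasurableSpace α]
    {μ : Measure α} [IsProbabilityMeasure μ] [NormedAddCommGroup E] [NormedSpace ℝ E]
    {w : α → ℝ} {u : α → E} {η M : ℝ}
    (hw : Integrable w μ) (hwη : ∀ᵐ y ∂μ, η ≤ w y) (hu : AEStronglyMeasurable u μ)
    (huM : ∀ᵐ y ∂μ, ‖u y‖ ≤ M) (hmean : ∫ y, u y ∂μ = 0) :
    ‖∫ y, w y • u y ∂μ‖ ≤ ((∫ y, w y ∂μ) - η) * M := by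
  have hu_int : Integrable u μ := Integrable.of_bound hu M huM
  have hwu_int : Integrable (fun y => w y • u y) μ := hw.smul_bdd M hu huM
  have hshift : ∫ y, w y • u y ∂μ = ∫ y, (w y - η) • u y ∂μ := by
    have hηu_int : Integrable (fun y => η • u y) μ := hu_int.smul η
    simp_rw [sub_smul]
    rw [integral_sub hwu_int hηu_int, integral_smul, hmean, smul_zero, sub_zero]
  calc ‖∫ y, w y • u y ∂μ‖ = ‖∫ y, (w y - η) • u y ∂μ‖ := by rw [hshift]
    _ ≤ ∫ y, (w y - η) * M ∂μ := by
      refine norm_integral_le_of_norm_le ((hw.sub (integrable_const η)).mul_const M) ?_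
      filter_upwards [hwη, huM] with y hy hyM
      rw [norm_smul, Real.norm_of_nonneg (sub_nonneg.2 hy)]
      exact mul_le_mul_of_nonneg_left hyM (sub_nonneg.2 hy)
    _ = ((∫ y, w y ∂μ) - η) * M := by
      rw [integral_mul_const, integral_sub hw (integrable_const η), integral_const]
      simp

theorem mul_sSup_image_le_of_forall_mul_le {α : Type*} {s : Set α} {f Φ : α → ℝ}
    {η K C : ℝ} (hs : s.Nonempty) (hf : BddAbove (f '' s)) (hK : 0 < K)
    (hΦK : ∀ z ∈ s, Φ z ≤ K)
    (h : ∀ z ∈ s, Φ z * f z ≤ (Φ z - η) * sSup (f '' s) + C) :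
    η * sSup (f '' s) ≤ C := by
  set M := sSup (f '' s)
  have hfM : ∀ z ∈ s, f z ≤ M := fun z hz => le_csSup hf (mem_image_of_mem f hz)
  -- a uniform gap `(η M - C) / K` below `M` would contradict `M = sup f`
  have hgap : ∀ z ∈ s, f z ≤ M - (η * M - C) / K := by
    intro z hz
    have : η * M - C ≤ K * (M - f z) := by
      nlinarith [h z hz, hΦK z hz, hfM z hz]
    rw [le_sub_iff_add_le, ← le_sub_iff_add_le', div_le_iff₀ hK]
    linarith
  have hM : M ≤ M - (η * M - C) / K :=
    csSup_le (hs.image f) (forall_mem_image.2 hgap)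
  have : (η * M - C) / K ≤ 0 := by linarith
  linarith [(div_le_iff₀ hK).1 this]

theorem velocity_Linfty_bound_general {d : ℕ} (S : ℝ)
    (ρ : Measure (EuclideanSpace ℝ (Fin d))) [IsProbabilityMeasure ρ]
    (hsupp : measureSupport ρ ⊆ Metric.closedBall 0 S)
    (φ : ℝ → ℝ)
    (hφmono : AntitoneOn φ (Set.Ici 0))
    (η : ℝ) (hη : η = φ (2 * S)) (hηpos : 0 < η)
    (G : EuclideanSpace ℝ (Fin d) → EuclideanSpace ℝ (Fin d))
    (CG : ℝ) (hGbdd : ∀ x, ‖G x‖ ≤ CG)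
    (u : EuclideanSpace ℝ (Fin d) → EuclideanSpace ℝ (Fin d))
    (hu : AEStronglyMeasurable u ρ)
    (Bu : ℝ) (hubdd : ∀ x ∈ measureSupport ρ, ‖u x‖ ≤ Bu)
    (heq : ∀ x ∈ measureSupport ρ,
      (∫ y, φ ‖x - y‖ ∂ρ) • u x =
        (∫ y, φ ‖x - y‖ • u y ∂ρ) - ∫ y, G (x - y) ∂ρ)
    (hmom : (∫ y, u y ∂ρ) = 0) :
    ∀ x ∈ measureSupport ρ, ‖u x‖ ≤ CG / η := by
  intro x hx
  set s := measureSupport ρ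
  set M := sSup ((fun y => ‖u y‖) '' s)
  have hae : ∀ᵐ y ∂ρ, y ∈ s := ae_mem_measureSupport ρ
  have hball : ∀ᵐ y ∂ρ, y ∈ Metric.closedBall 0 S := hae.mono fun y hy => hsupp hy
  have hbdd : BddAbove ((fun y => ‖u y‖) '' s) := ⟨Bu, forall_mem_image.2 hubdd⟩
  have huM : ∀ᵐ y ∂ρ, ‖u y‖ ≤ M := hae.mono fun y hy => le_csSup hbdd (mem_image_of_mem _ hy)
  have hΦ : ∀ z ∈ s, ∫ y, φ ‖z - y‖ ∂ρ ∈ Icc η (φ 0) := fun z hz =>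
    hη ▸ hφmono.integral_comp_norm_sub_mem_Icc hball (hsupp hz)
  have hpoint : ∀ z ∈ s, (∫ y, φ ‖z - y‖ ∂ρ) * ‖u z‖
      ≤ ((∫ y, φ ‖z - y‖ ∂ρ) - η) * M + CG := fun z hz =>
    calc (∫ y, φ ‖z - y‖ ∂ρ) * ‖u z‖ = ‖(∫ y, φ ‖z - y‖ ∂ρ) • u z‖ := by
          rw [norm_smul, Real.norm_of_nonneg (hηpos.le.trans (hΦ z hz).1)]
      _ ≤ ‖∫ y, φ ‖z - y‖ • u y ∂ρ‖ + ‖∫ y, G (z - y) ∂ρ‖ := heq z hz ▸ norm_sub_le _ _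
      _ ≤ ((∫ y, φ ‖z - y‖ ∂ρ) - η) * M + CG := by
          gcongr
          · exact norm_integral_smul_le_of_integral_eq_zero
              (hφmono.integrable_comp_norm_sub hball (hsupp hz))
              (hη ▸ hball.mono fun y hy => hφmono.le_comp_norm_sub (hsupp hz) hy) hu huM hmom
          · simpa using norm_integral_le_of_norm_le_const (μ := ρ)
              (Eventually.of_forall fun y => hGbdd (z - y))
  have hηM : η * M ≤ CG := mul_sSup_image_le_of_forall_mul_le ⟨x, hx⟩ hbdd
    (hηpos.trans_le ((hΦ x hx).1.trans (hΦ x hx).2)) (fun z hz => (hΦ z hz).2) hpoint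
  exact (le_csSup hbdd (mem_image_of_mem _ hx)).trans ((le_div_iff₀ hηpos).2 (by linarith))

theorem velocity_Linfty_bound {d : ℕ} (S : ℝ)
    (ρ : Measure (EuclideanSpace ℝ (Fin d))) [IsProbabilityMeasure ρ]
    (hsupp : measureSupport ρ ⊆ Metric.closedBall 0 S)
    (hcompact : IsCompact (measureSupport ρ))
    (φ : ℝ → ℝ) (hφpos : ∀ r : ℝ, 0 ≤ r → 0 < φ r)
    (hφmono : AntitoneOn φ (Set.Ici 0))
    (L : NNReal) (hφlip : LipschitzOnWith L φ (Set.Ici 0))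
    (B : ℝ) (hφbdd : ∀ r : ℝ, 0 ≤ r → φ r ≤ B)
    (η : ℝ) (hη : η = φ (2 * S)) (hηpos : 0 < η)
    (G : EuclideanSpace ℝ (Fin d) → EuclideanSpace ℝ (Fin d))
    (LG : NNReal) (hGlip : LipschitzWith LG G)
    (CG : ℝ) (hGbdd : ∀ x, ‖G x‖ ≤ CG)
    (u : EuclideanSpace ℝ (Fin d) → EuclideanSpace ℝ (Fin d))
    (hu : AEStronglyMeasurable u ρ)
    (Bu : ℝ) (hubdd : ∀ x ∈ measureSupport ρ, ‖u x‖ ≤ Bu)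
    (heq : ∀ x ∈ measureSupport ρ,
      (∫ y, φ ‖x - y‖ ∂ρ) • u x =
        (∫ y, φ ‖x - y‖ • u y ∂ρ) - ∫ y, G (x - y) ∂ρ)
    (hmom : (∫ y, u y ∂ρ) = 0) :
    ∀ x ∈ measureSupport ρ, ‖u x‖ ≤ CG / η :=
  velocity_Linfty_bound_general S ρ hsupp φ hφmono η hη hηpos G CG hGbdd u hu Bu hubdd heq hmom
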